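/- Consider a heterogeneous game Γ(n,T,x,y,z) with y > 0 and z > 0 (anti-coordination game). For a ∈ [0,1], the constant strategy α* with α*_t = a for all t ∈ T is a symmetric Nash equilibrium if and only if a = ζ. -/

import Mathlib

open Finset

noncomputable def U {T : Type*} [Fintype T] (n : ℕ) (x : T → ℝ) (y z : ℝ)
    (α β : T → ℝ) : ℝ :=
  z * ∑ j, x j * β j +
    ∑ j, (x j / ((n : ℝ) - 1)) *
      (((n : ℝ) - 1) * y + (y + z) * β j - (n : ℝ) * (y + z) * ∑ i, x i * β i) * α j

def IsStrategy {T : Type*} (α : T → ℝ) : Prop :=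
  ∀ t, α t ∈ Set.Icc (0 : ℝ) 1

def IsSymNash {T : Type*} [Fintype T] (n : ℕ) (x : T → ℝ) (y z : ℝ)
    (α : T → ℝ) : Prop :=
  IsStrategy α ∧ ∀ β : T → ℝ, IsStrategy β → U n x y z β α ≤ U n x y z α α

/-
Against opponents who cooperate with the same probability `a` with every type, a player's
payoff is affine in the total cooperation `∑ j, x j * β j`, with slope `y - (y + z) * a`.
A constant strategy is therefore a best reply to itself exactly when that slope vanishes:
if it is positive, deviating to full cooperation pays unless `a = 1`, which makes the slope
`-z < 0`; if it is negative, deviating to full defection pays unless `a = 0`, which makes the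
slope `y > 0`.
-/

section HeterogeneousGame

variable {T : Type*} [Fintype T] {n : ℕ} {x : T → ℝ} {y z a : ℝ}

theorem U_const_right (hx : ∑ t, x t = 1) (hn : (n : ℝ) ≠ 1) (β : T → ℝ) :
    U n x y z β (fun _ => a) = z * a + (y - (y + z) * a) * ∑ j, x j * β j := by
  have hsum : ∑ i, x i * a = a := by rw [← sum_mul, hx, one_mul]
  have hn1 : (n : ℝ) - 1 ≠ 0 := sub_ne_zero.mpr hn
  simp only [U, hsum, mul_sum]
  congr 1
  refine sum_congr rfl fun j _ => ?_
  field_simp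
  ring

theorem isSymNash_const_of_eq (hx : ∑ t, x t = 1) (hn : (n : ℝ) ≠ 1)
    (ha : a ∈ Set.Icc (0 : ℝ) 1) (hc : y = (y + z) * a) :
    IsSymNash n x y z (fun _ : T => a) := by
  refine ⟨fun _ => ha, fun β _ => ?_⟩
  simp only [U_const_right hx hn, sub_eq_zero.mpr hc, zero_mul, le_refl]

theorem eq_of_isSymNash_const [Nonempty T] (hx : ∑ t, x t = 1) (hn : (n : ℝ) ≠ 1)
    (hy : 0 < y) (hz : 0 < z) (h : IsSymNash n x y z (fun _ : T => a)) :
    y = (y + z) * a := by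
  obtain ⟨hα, hbest⟩ := h
  have hsum (b : ℝ) : ∑ j, x j * b = b := by rw [← sum_mul, hx, one_mul]
  obtain ⟨ha0, ha1⟩ := hα (Classical.arbitrary T)
  have hcoop := hbest (fun _ => 1) fun _ => ⟨zero_le_one, le_rfl⟩
  have hdefect := hbest (fun _ => 0) fun _ => ⟨le_rfl, zero_le_one⟩
  simp only [U_const_right hx hn, hsum] at hcoop hdefect
  nlinarith

end HeterogeneousGame

theorem stmt3_general {T : Type*} [Fintype T]
    (n : ℕ) (x : T → ℝ) (hx : ∑ t, x t = 1)
    (hxt : ∀ t : T, 1 < (n : ℝ) * x t ∧ (n : ℝ) * x t < n)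
    (y z : ℝ) (hy : 0 < y) (hz : 0 < z) (a : ℝ) (ha : a ∈ Set.Icc (0 : ℝ) 1) :
    IsSymNash n x y z (fun _ : T => a) ↔ a = y / (y + z) := by
  obtain ⟨t, -⟩ := exists_ne_zero_of_sum_ne_zero (hx.symm ▸ one_ne_zero : ∑ t, x t ≠ 0)
  have : Nonempty T := ⟨t⟩
  have hn : (n : ℝ) ≠ 1 := by linarith [hxt t]
  rw [eq_div_iff (by positivity), mul_comm, eq_comm]
  exact ⟨eq_of_isSymNash_const hx hn hy hz, isSymNash_const_of_eq hx hn ha⟩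

theorem stmt3 {T : Type*} [Fintype T] (hT : 2 ≤ Fintype.card T)
    (n : ℕ) (x : T → ℝ) (hx : ∑ t, x t = 1)
    (hxt : ∀ t : T, 1 < (n : ℝ) * x t ∧ (n : ℝ) * x t < n)
    (y z : ℝ) (hy : 0 < y) (hz : 0 < z) (a : ℝ) (ha : a ∈ Set.Icc (0 : ℝ) 1) :
    IsSymNash n x y z (fun _ : T => a) ↔ a = y / (y + z) :=
  stmt3_general n x hx hxt y z hy hz a ha
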